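/- arXiv:2004.09498 — 4 statements merged into one kernel-verified Lean document; each statement's English description precedes it below -/
import Mathlib

section
/- Let N ≥ 2 and let D = [d_ij] ∈ ℂ^{N×N} be a matrix each of whose rows sums to 1 (i.e. D·𝟏 = 𝟏, where 𝟏 ∈ ℂ^N is the all-ones vector). Define the reduced matrix D̃ = [d̃_ij] ∈ ℂ^{(N−1)×(N−1)} by d̃_ij = d_ij − d_Nj for i, j ∈ {1,…,N−1}. Then for every λ ∈ ℂ with λ ≠ 1, λ is an eigenvalue of D if and only if λ is an eigenvalue of D̃. -/
/-!
The map `P x = (x i - x N)ᵢ` intertwines `D` with `D̃` (`P D = D̃ P`, using `D 𝟏 = 𝟏`), is onto, and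
its kernel is spanned by the fixed vector `𝟏`. An eigenvector of `D` for `λ ≠ 1` therefore cannot
lie in `ker P` and maps to an eigenvector of `D̃`. Conversely, a lift `x` of an eigenvector of `D̃`
satisfies `D x - λ x = k ∈ ker P`; since `D k = k`, the corrected lift `x + k / (λ - 1)` is an
eigenvector of `D`.
-/

open Matrix

section Eigenvector

variable {K V W : Type*} [Field K] [AddCommGroup V] [Module K V] [AddCommGroup W] [Module K W]
  {f : V →ₗ[K] V} {g : W →ₗ[K] W} {P : V →ₗ[K] W} {μ : K}

theorem exists_eigenvector_of_semiconj (hfg : Function.Semiconj P f g)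
    (hker : ∀ v, P v = 0 → f v = v) (hμ : μ ≠ 1) (h : ∃ v, v ≠ 0 ∧ f v = μ • v) :
    ∃ w, w ≠ 0 ∧ g w = μ • w := by
  obtain ⟨v, hv0, hv⟩ := h
  refine ⟨P v, fun hPv ↦ hμ ?_, by rw [← hfg v, hv, map_smul]⟩
  exact smul_left_injective K hv0 (show μ • v = (1 : K) • v by rw [one_smul, ← hv, hker v hPv])

theorem exists_eigenvector_of_semiconj_of_surjective (hP : Function.Surjective P)
    (hfg : Function.Semiconj P f g) (hker : ∀ v, P v = 0 → f v = v) (hμ : μ ≠ 1)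
    (h : ∃ w, w ≠ 0 ∧ g w = μ • w) : ∃ v, v ≠ 0 ∧ f v = μ • v := by
  obtain ⟨w, hw0, hw⟩ := h
  obtain ⟨v, rfl⟩ := hP w
  set k := f v - μ • v
  have hPk : P k = 0 := by rw [map_sub, hfg v, hw, map_smul, sub_self]
  have hfk : f k = k := hker k hPk
  refine ⟨v + (μ - 1)⁻¹ • k, fun h ↦ hw0 ?_, ?_⟩
  · simpa [hPk] using congrArg P h
  · have hfv : f v = k + μ • v := (sub_add_cancel _ _).symm
    rw [map_add, map_smul, hfk, hfv]
    match_scalars <;> field_simp <;> ring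

theorem exists_eigenvector_iff_of_semiconj (hP : Function.Surjective P)
    (hfg : Function.Semiconj P f g) (hker : ∀ v, P v = 0 → f v = v) (hμ : μ ≠ 1) :
    (∃ v, v ≠ 0 ∧ f v = μ • v) ↔ ∃ w, w ≠ 0 ∧ g w = μ • w :=
  ⟨exists_eigenvector_of_semiconj hfg hker hμ,
    exists_eigenvector_of_semiconj_of_surjective hP hfg hker hμ⟩

end Eigenvector

section Reduction

variable (R : Type*) [CommRing R] (n : ℕ)

def subLast : (Fin (n + 1) → R) →ₗ[R] (Fin n → R) where
  toFun x j := x j.castSucc - x (Fin.last n)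
  map_add' x y := by ext j; simp only [Pi.add_apply]; ring
  map_smul' c x := by ext j; simp only [Pi.smul_apply, smul_eq_mul, RingHom.id_apply]; ring

variable {R n}

@[simp]
theorem subLast_apply (x : Fin (n + 1) → R) (j : Fin n) :
    subLast R n x j = x j.castSucc - x (Fin.last n) :=
  rfl

theorem subLast_snoc_zero (y : Fin n → R) : subLast R n (Fin.snoc y 0) = y := by
  ext j
  simp

theorem subLast_smul_one (c : R) : subLast R n (c • 1) = 0 := by
  ext j
  simp

theorem eq_snoc_subLast_add_smul_one (x : Fin (n + 1) → R) :
    x = Fin.snoc (subLast R n x) 0 + x (Fin.last n) • 1 := by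
  ext i
  induction i using Fin.lastCases <;> simp

theorem eq_smul_one_of_subLast_eq_zero {x : Fin (n + 1) → R} (hx : subLast R n x = 0) :
    x = x (Fin.last n) • 1 := by
  ext i
  induction i using Fin.lastCases with
  | last => simp
  | cast j => simpa [sub_eq_zero] using congrFun hx j

def reducedMatrix (D : Matrix (Fin (n + 1)) (Fin (n + 1)) R) : Matrix (Fin n) (Fin n) R :=
  of fun i j ↦ D i.castSucc j.castSucc - D (Fin.last n) j.castSucc

theorem reducedMatrix_mulVec (D : Matrix (Fin (n + 1)) (Fin (n + 1)) R) (y : Fin n → R) :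
    reducedMatrix D *ᵥ y = subLast R n (D *ᵥ Fin.snoc y 0) := by
  ext i
  simp [reducedMatrix, mulVec, dotProduct, Fin.sum_univ_castSucc, sub_mul]

variable {D : Matrix (Fin (n + 1)) (Fin (n + 1)) R}

theorem subLast_mulVec (hD : D *ᵥ 1 = 1) (x : Fin (n + 1) → R) :
    subLast R n (D *ᵥ x) = reducedMatrix D *ᵥ subLast R n x := by
  conv_lhs => rw [eq_snoc_subLast_add_smul_one x]
  rw [mulVec_add, mulVec_smul, hD, map_add, subLast_smul_one, add_zero,
    reducedMatrix_mulVec]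

theorem mulVec_eq_self_of_subLast_eq_zero (hD : D *ᵥ 1 = 1) {x : Fin (n + 1) → R}
    (hx : subLast R n x = 0) : D *ᵥ x = x := by
  rw [eq_smul_one_of_subLast_eq_zero hx, mulVec_smul, hD]

end Reduction

theorem reduced_matrix_eigenvalue_iff_general
    (n : ℕ)
    (D : Matrix (Fin (n + 1)) (Fin (n + 1)) ℂ)
    (hrow : D.mulVec (fun _ => 1) = fun _ => 1)
    (Dt : Matrix (Fin n) (Fin n) ℂ)
    (hDt : ∀ i j : Fin n, Dt i j = D i.castSucc j.castSucc - D (Fin.last n) j.castSucc)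
    (lam : ℂ) (hlam : lam ≠ 1) :
    (∃ x : Fin (n + 1) → ℂ, x ≠ 0 ∧ D.mulVec x = lam • x) ↔
      (∃ y : Fin n → ℂ, y ≠ 0 ∧ Dt.mulVec y = lam • y) := by
  obtain rfl : Dt = reducedMatrix D := Matrix.ext hDt
  exact exists_eigenvector_iff_of_semiconj (f := D.mulVecLin) (g := (reducedMatrix D).mulVecLin)
    (fun y ↦ ⟨_, subLast_snoc_zero y⟩) (subLast_mulVec hrow)
    (fun _ ↦ mulVec_eq_self_of_subLast_eq_zero hrow) hlam

theorem reduced_matrix_eigenvalue_iff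
    (n : ℕ) (hn : 1 ≤ n)
    (D : Matrix (Fin (n + 1)) (Fin (n + 1)) ℂ)
    (hrow : D.mulVec (fun _ => 1) = fun _ => 1)
    (Dt : Matrix (Fin n) (Fin n) ℂ)
    (hDt : ∀ i j : Fin n, Dt i j = D i.castSucc j.castSucc - D (Fin.last n) j.castSucc)
    (lam : ℂ) (hlam : lam ≠ 1) :
    (∃ x : Fin (n + 1) → ℂ, x ≠ 0 ∧ D.mulVec x = lam • x) ↔
      (∃ y : Fin n → ℂ, y ≠ 0 ∧ Dt.mulVec y = lam • y) :=
  reduced_matrix_eigenvalue_iff_general n D hrow Dt hDt lam hlam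
end

section
/- Let M ∈ ℂ^{n×n} be Schur stable (all eigenvalues of modulus strictly less than 1) and let f : ℕ → ℂⁿ be a sequence with f(k) → 0 as k → ∞. Then every solution of the driven recursion x(k+1) = M x(k) + f(k) satisfies x(k) → 0 as k → ∞, for every initial condition x(0) ∈ ℂⁿ. -/
/-!
Schur stability says that the spectral radius of `M` is `< 1`, so by Gelfand's formula `‖M ^ k‖`
is eventually dominated by a geometric sequence and is summable. Variation of constants gives
`x k = M ^ k x 0 + ∑_{i < k} M ^ i f (k - 1 - i)`, and the convolution of a summable sequence with
a null sequence is a null sequence, by Tannery's theorem.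
-/

open Filter Topology Finset Matrix
open scoped NNReal

theorem spectralRadius_lt_of_forall_nnnorm_lt {A : Type*} [NormedRing A]
    [NormedAlgebra ℂ A] [CompleteSpace A] (a : A) {r : ℝ≥0} (hr : 0 < r)
    (h : ∀ z ∈ spectrum ℂ a, ‖z‖₊ < r) : spectralRadius ℂ a < r := by
  cases subsingleton_or_nontrivial A
  · simpa [spectralRadius, spectrum.of_subsingleton] using hr
  · exact spectrum.spectralRadius_lt_of_forall_lt a h

theorem Matrix.exists_mulVec_eq_smul_of_mem_spectrum {K n : Type*} [Field K] [Fintype n]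
    [DecidableEq n] {M : Matrix n n K} {μ : K} (hμ : μ ∈ spectrum K M) :
    ∃ v, v ≠ 0 ∧ M *ᵥ v = μ • v := by
  rw [← Matrix.spectrum_toLin', ← Module.End.hasEigenvalue_iff_mem_spectrum] at hμ
  obtain ⟨v, hv⟩ := hμ.exists_hasEigenvector
  exact ⟨v, hv.2, by simpa using Module.End.mem_eigenspace_iff.mp hv.1⟩

theorem summable_norm_pow_of_spectralRadius_lt_one {A : Type*} [NormedRing A]
    [NormedAlgebra ℂ A] [CompleteSpace A] {a : A} (ha : spectralRadius ℂ a < 1) :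
    Summable (fun k ↦ ‖a ^ k‖) := by
  obtain ⟨r, har, hr1⟩ := ENNReal.lt_iff_exists_nnreal_btwn.mp ha
  have hr1' : r < 1 := mod_cast hr1
  have hpow : ∀ᶠ k : ℕ in atTop, ‖a ^ k‖ ≤ (r : ℝ) ^ k := by
    filter_upwards [(spectrum.pow_nnnorm_pow_one_div_tendsto_nhds_spectralRadius a).eventually
      (eventually_lt_nhds har), eventually_gt_atTop 0] with k hk hk0
    rw [one_div, ENNReal.rpow_inv_lt_iff (by positivity), ENNReal.rpow_natCast] at hk
    exact_mod_cast hk.le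
  exact (summable_geometric_of_lt_one r.2 hr1').of_norm_bounded_eventually_nat
    (by simpa using hpow)

theorem Matrix.eq_pow_mulVec_add_sum_of_succ_eq {R n : Type*} [Semiring R] [Fintype n]
    [DecidableEq n] (M : Matrix n n R) {f x : ℕ → n → R}
    (hx : ∀ k, x (k + 1) = M *ᵥ x k + f k) (k : ℕ) :
    x k = M ^ k *ᵥ x 0 + ∑ i ∈ range k, M ^ i *ᵥ f (k - 1 - i) := by
  induction k with
  | zero => simp
  | succ k ih =>
    rw [hx, ih, Matrix.mulVec_add, Matrix.mulVec_sum, sum_range_succ', add_assoc]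
    simp [Matrix.mulVec_mulVec, ← pow_succ', Nat.sub_sub, add_comm]

theorem tendsto_sum_range_mul_sub_of_summable {a b : ℕ → ℝ} (ha : Summable a)
    (hb : Tendsto b atTop (𝓝 0)) :
    Tendsto (fun k ↦ ∑ i ∈ range k, a i * b (k - 1 - i)) atTop (𝓝 0) := by
  obtain ⟨B, hB⟩ := isBounded_iff_forall_norm_le.mp (Metric.isBounded_range_of_tendsto b hb)
  set F : ℕ → ℕ → ℝ := fun k i ↦ if i < k then a i * b (k - 1 - i) else 0
  have hF : ∀ k, ∑ i ∈ range k, a i * b (k - 1 - i) = ∑' i, F k i := fun k ↦ by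
    rw [tsum_eq_sum (s := range k) fun i hi ↦ if_neg (by simpa using hi)]
    exact sum_congr rfl fun i hi ↦ (if_pos (mem_range.mp hi)).symm
  have hF_tendsto : ∀ i, Tendsto (F · i) atTop (𝓝 0) := fun i ↦ by
    have hshift : Tendsto (fun k ↦ k - 1 - i) atTop atTop :=
      (tendsto_sub_atTop_nat i).comp (tendsto_sub_atTop_nat 1)
    have hlim : Tendsto (fun k ↦ a i * b (k - 1 - i)) atTop (𝓝 0) := by
      simpa using (hb.comp hshift).const_mul (a i)
    refine hlim.congr' ?_
    filter_upwards [eventually_gt_atTop i] with k hk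
    simp [F, hk]
  have hF_le : ∀ k i, ‖F k i‖ ≤ ‖a i‖ * B := fun k i ↦ by
    by_cases hi : i < k
    · simpa [F, hi, norm_mul] using
        mul_le_mul_of_nonneg_left (hB _ ⟨_, rfl⟩) (norm_nonneg (a i))
    · simpa [F, hi] using mul_nonneg (norm_nonneg (a i)) ((norm_nonneg _).trans (hB _ ⟨0, rfl⟩))
  simpa [hF] using tendsto_tsum_of_dominated_convergence (ha.norm.mul_right B) hF_tendsto
    (.of_forall hF_le)

attribute [local instance] Matrix.linftyOpNormedAddCommGroup Matrix.linftyOpNormedRing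
  Matrix.linftyOpNormedAlgebra

theorem schur_stable_driven_tendsto_zero
    (n : ℕ) (M : Matrix (Fin n) (Fin n) ℂ)
    (hM : ∀ μ : ℂ, (∃ x : Fin n → ℂ, x ≠ 0 ∧ M.mulVec x = μ • x) → ‖μ‖ < 1)
    (f : ℕ → Fin n → ℂ)
    (hf : Filter.Tendsto f Filter.atTop (nhds 0))
    (x : ℕ → Fin n → ℂ)
    (hx : ∀ k : ℕ, x (k + 1) = M.mulVec (x k) + f k) :
    Filter.Tendsto x Filter.atTop (nhds 0) := by
  have hρ : spectralRadius ℂ M < 1 := by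
    simpa using spectralRadius_lt_of_forall_nnnorm_lt M one_pos fun μ hμ ↦
      mod_cast hM μ (exists_mulVec_eq_smul_of_mem_spectrum hμ)
  have hsum := summable_norm_pow_of_spectralRadius_lt_one hρ
  have hbound : ∀ k, ‖x k‖ ≤ ‖M ^ k‖ * ‖x 0‖ + ∑ i ∈ range k, ‖M ^ i‖ * ‖f (k - 1 - i)‖ :=
    fun k ↦ by
      rw [M.eq_pow_mulVec_add_sum_of_succ_eq hx k]
      refine (norm_add_le _ _).trans (add_le_add (linfty_opNorm_mulVec _ _) ?_)
      exact (norm_sum_le _ _).trans (sum_le_sum fun i _ ↦ linfty_opNorm_mulVec _ _)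
  have hlim := (hsum.tendsto_atTop_zero.mul_const ‖x 0‖).add
    (tendsto_sum_range_mul_sub_of_summable hsum (tendsto_zero_iff_norm_tendsto_zero.mp hf))
  exact squeeze_zero_norm hbound (by simpa using hlim)
end

section
/- Let A ∈ ℝ^{n×n}, B ∈ ℝ^{n×m}, C ∈ ℝ^{p×n}, K ∈ ℝ^{m×n}, H ∈ ℝ^{n×p}, N ≥ 1, and D̄ = [d̄_ij] ∈ ℝ^{N×N}. Let x_r : ℕ → ℝⁿ satisfy x_r(k+1) = A x_r(k). Suppose sequences x_i, η_i, x̂_i : ℕ → ℝⁿ and d_i : ℕ → ℝ^m (i = 1,…,N) satisfy x_i(k+1) = A x_i(k) + B(−K η_i(k) + d_i(k)), η_i(k+1) = A η_i(k) − BK η_i(k) + A x̂_i(k) − A ζ̌_i(k), x̂_i(k+1) = A x̂_i(k) + H(ζ̄_i(k) − C x̂_i(k)) − BK ζ̌_i(k), where ζ̄_i(k) = C(x_i(k) − x_r(k)) − Σ_{j=1}^N d̄_ij C(x_j(k) − x_r(k)) and ζ̌_i(k) = η_i(k) − Σ_{j=1}^N d̄_ij η_j(k). Define the stacked vectors x̃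 = (x_1 − x_r, …, x_N − x_r), x̂ = (x̂_1, …, x̂_N), d = (d_1,…,d_N), and set ẽ(k) = (x̃(k) − x̂(k)) − (D̄ ⊗ I_n) x̃(k). Then for all k ∈ ℕ, ẽ(k+1) = (I_N ⊗ (A − HC)) ẽ(k) + ((I_N − D̄) ⊗ B) d(k). -/
/-!
Blockwise, `D̄ ⊗ I` acts on a stacked vector by mixing the blocks with the weights `d̄ᵢⱼ`, and
`I ⊗ M` acts as `M` on every block. The identity is therefore the stack of the per-agent
recursions `eᵢ(k+1) = (A - HC) eᵢ(k) + B dᵢ(k) - Σⱼ d̄ᵢⱼ B dⱼ(k)` for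
`eᵢ = x̃ᵢ - x̂ᵢ - Σⱼ d̄ᵢⱼ x̃ⱼ`, in which the controller terms `BKηⱼ` cancel: `x̂ᵢ` is driven by
`-BK ζ̌ᵢ`, exactly the combination of the `η`'s that `x̃ᵢ - Σⱼ d̄ᵢⱼ x̃ⱼ` receives.
-/

open Kronecker Matrix

namespace Function

theorem curry_add {α β γ : Type*} [Add γ] (f g : α × β → γ) :
    curry (f + g) = curry f + curry g :=
  rfl

theorem curry_sub {α β γ : Type*} [Sub γ] (f g : α × β → γ) :
    curry (f - g) = curry f - curry g :=
  rfl

end Function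

namespace Matrix

variable {R ι κ n m : Type*}

theorem curry_kronecker_mulVec [Semiring R] [Fintype κ] [Fintype m] (M : Matrix ι κ R)
    (P : Matrix n m R) (v : κ × m → R) (i : ι) :
    Function.curry ((M ⊗ₖ P) *ᵥ v) i = ∑ j, M i j • P *ᵥ Function.curry v j := by
  ext a
  simp [mulVec, dotProduct, Fintype.sum_prod_type, Finset.mul_sum, mul_assoc]

theorem curry_one_kronecker_mulVec [Semiring R] [Fintype ι] [DecidableEq ι] [Fintype m]
    (P : Matrix n m R) (v : ι × m → R) (i : ι) :
    Function.curry (((1 : Matrix ι ι R) ⊗ₖ P) *ᵥ v) i = P *ᵥ Function.curry v i := by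
  simp [curry_kronecker_mulVec, one_apply]

theorem curry_kronecker_one_mulVec [Semiring R] [Fintype κ] [Fintype n] [DecidableEq n]
    (M : Matrix ι κ R) (v : κ × n → R) (i : ι) :
    Function.curry ((M ⊗ₖ (1 : Matrix n n R)) *ᵥ v) i = ∑ j, M i j • Function.curry v j := by
  simp [curry_kronecker_mulVec]

theorem curry_one_sub_kronecker_mulVec [Ring R] [Fintype ι] [DecidableEq ι] [Fintype m]
    (M : Matrix ι ι R) (P : Matrix n m R) (v : ι × m → R) (i : ι) :
    Function.curry (((1 - M) ⊗ₖ P) *ᵥ v) i =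
      P *ᵥ Function.curry v i - ∑ j, M i j • P *ᵥ Function.curry v j := by
  simp [curry_kronecker_mulVec, sub_smul, one_apply]

end Matrix

section LocalError

variable {R ι n m p : Type*} [CommRing R] [Fintype ι] [Fintype n] [Fintype m] [Fintype p]

def localError (Db : Matrix ι ι R) (xr : ℕ → n → R) (x xh : ι → ℕ → n → R) (i : ι) (k : ℕ) :
    n → R :=
  (x i k - xr k) - xh i k - ∑ j, Db i j • (x j k - xr k)

theorem localError_succ (A : Matrix n n R) (B : Matrix n m R) (C : Matrix p n R)
    (K : Matrix m n R) (H : Matrix n p R) (Db : Matrix ι ι R) (xr : ℕ → n → R)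
    (x η xh : ι → ℕ → n → R) (d : ι → ℕ → m → R)
    (hxr : ∀ k, xr (k + 1) = A *ᵥ xr k)
    (hx : ∀ i k, x i (k + 1) = A *ᵥ x i k + B *ᵥ (-(K *ᵥ η i k) + d i k))
    (hxh : ∀ i k, xh i (k + 1) =
        A *ᵥ xh i k
          + H *ᵥ ((C *ᵥ (x i k - xr k) - ∑ j, Db i j • C *ᵥ (x j k - xr k)) - C *ᵥ xh i k)
          - (B * K) *ᵥ (η i k - ∑ j, Db i j • η j k))
    (i : ι) (k : ℕ) :
    localError Db xr x xh i (k + 1) =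
      (A - H * C) *ᵥ localError Db xr x xh i k + (B *ᵥ d i k - ∑ j, Db i j • B *ᵥ d j k) := by
  simp only [localError, hx, hxh, hxr, mulVec_add, mulVec_sub, sub_mulVec, mulVec_neg,
    mulVec_mulVec, mulVec_sum, mulVec_smul, smul_sub, smul_add, smul_neg,
    Finset.sum_sub_distrib, Finset.sum_add_distrib, Finset.sum_neg_distrib]
  abel

end LocalError

theorem regulated_error_identity_general
    (n m p N : ℕ)
    (A : Matrix (Fin n) (Fin n) ℝ) (B : Matrix (Fin n) (Fin m) ℝ)
    (C : Matrix (Fin p) (Fin n) ℝ)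
    (K : Matrix (Fin m) (Fin n) ℝ) (H : Matrix (Fin n) (Fin p) ℝ)
    (Db : Matrix (Fin N) (Fin N) ℝ)
    (xr : ℕ → Fin n → ℝ)
    (hxr : ∀ k, xr (k + 1) = A.mulVec (xr k))
    (x η xh : Fin N → ℕ → Fin n → ℝ)
    (d : Fin N → ℕ → Fin m → ℝ)
    (hx : ∀ i k, x i (k + 1) =
        A.mulVec (x i k) + B.mulVec (-(K.mulVec (η i k)) + d i k))
    (hxh : ∀ i k, xh i (k + 1) =
        A.mulVec (xh i k)
          + H.mulVec ((C.mulVec (x i k - xr k)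
              - ∑ j, Db i j • C.mulVec (x j k - xr k))
              - C.mulVec (xh i k))
          - (B * K).mulVec (η i k - ∑ j, Db i j • η j k))
    (xt : ℕ → Fin N × Fin n → ℝ)
    (hxt : ∀ k q, xt k q = x q.1 k q.2 - xr k q.2)
    (xhs : ℕ → Fin N × Fin n → ℝ)
    (hxhs : ∀ k q, xhs k q = xh q.1 k q.2)
    (ds : ℕ → Fin N × Fin m → ℝ)
    (hds : ∀ k q, ds k q = d q.1 k q.2)
    (et : ℕ → Fin N × Fin n → ℝ)
    (het : ∀ k, et k = (xt k - xhs k)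
        - (Db ⊗ₖ (1 : Matrix (Fin n) (Fin n) ℝ)).mulVec (xt k)) :
    ∀ k, et (k + 1)
        = ((1 : Matrix (Fin N) (Fin N) ℝ) ⊗ₖ (A - H * C)).mulVec (et k)
          + (((1 : Matrix (Fin N) (Fin N) ℝ) - Db) ⊗ₖ B).mulVec (ds k) := by
  have hxt_curry : ∀ k, Function.curry (xt k) = fun i => x i k - xr k := fun k =>
    funext fun i => funext fun a => hxt k (i, a)
  have hxhs_curry : ∀ k, Function.curry (xhs k) = fun i => xh i k := fun k =>
    funext fun i => funext fun a => hxhs k (i, a)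
  have hds_curry : ∀ k, Function.curry (ds k) = fun i => d i k := fun k =>
    funext fun i => funext fun a => hds k (i, a)
  have het_curry : ∀ k i, Function.curry (et k) i = localError Db xr x xh i k := by
    intro k i
    rw [het, Function.curry_sub, Function.curry_sub, Pi.sub_apply, Pi.sub_apply,
      curry_kronecker_one_mulVec, hxt_curry, hxhs_curry, localError]
  intro k
  refine Function.curry_injective (funext fun i => ?_)
  rw [Function.curry_add, Pi.add_apply, curry_one_kronecker_mulVec,
    curry_one_sub_kronecker_mulVec, het_curry, het_curry, hds_curry,
    localError_succ A B C K H Db xr x η xh d hxr hx hxh]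

theorem regulated_error_identity
    (n m p N : ℕ) (hN : 1 ≤ N)
    (A : Matrix (Fin n) (Fin n) ℝ) (B : Matrix (Fin n) (Fin m) ℝ)
    (C : Matrix (Fin p) (Fin n) ℝ)
    (K : Matrix (Fin m) (Fin n) ℝ) (H : Matrix (Fin n) (Fin p) ℝ)
    (Db : Matrix (Fin N) (Fin N) ℝ)
    (xr : ℕ → Fin n → ℝ)
    (hxr : ∀ k, xr (k + 1) = A.mulVec (xr k))
    (x η xh : Fin N → ℕ → Fin n → ℝ)
    (d : Fin N → ℕ → Fin m → ℝ)
    (hx : ∀ i k, x i (k + 1) =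
        A.mulVec (x i k) + B.mulVec (-(K.mulVec (η i k)) + d i k))
    (hη : ∀ i k, η i (k + 1) =
        A.mulVec (η i k) - (B * K).mulVec (η i k)
          + A.mulVec (xh i k)
          - A.mulVec (η i k - ∑ j, Db i j • η j k))
    (hxh : ∀ i k, xh i (k + 1) =
        A.mulVec (xh i k)
          + H.mulVec ((C.mulVec (x i k - xr k)
              - ∑ j, Db i j • C.mulVec (x j k - xr k))
              - C.mulVec (xh i k))
          - (B * K).mulVec (η i k - ∑ j, Db i j • η j k))
    (xt : ℕ → Fin N × Fin n → ℝ)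
    (hxt : ∀ k q, xt k q = x q.1 k q.2 - xr k q.2)
    (xhs : ℕ → Fin N × Fin n → ℝ)
    (hxhs : ∀ k q, xhs k q = xh q.1 k q.2)
    (ds : ℕ → Fin N × Fin m → ℝ)
    (hds : ∀ k q, ds k q = d q.1 k q.2)
    (et : ℕ → Fin N × Fin n → ℝ)
    (het : ∀ k, et k = (xt k - xhs k)
        - (Db ⊗ₖ (1 : Matrix (Fin n) (Fin n) ℝ)).mulVec (xt k)) :
    ∀ k, et (k + 1)
        = ((1 : Matrix (Fin N) (Fin N) ℝ) ⊗ₖ (A - H * C)).mulVec (et k)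
          + (((1 : Matrix (Fin N) (Fin N) ℝ) - Db) ⊗ₖ B).mulVec (ds k) :=
  regulated_error_identity_general n m p N A B C K H Db xr hxr x η xh d hx hxh xt hxt xhs hxhs ds
    hds et het
end

section
/- Let N ≥ 2 and let D = [d_ij] ∈ ℂ^{N×N} satisfy D·𝟏 = 𝟏 (each row sums to 1), and define D̃ ∈ ℂ^{(N−1)×(N−1)} by d̃_ij = d_ij − d_Nj. If λ ∈ ℂ is a nonzero eigenvalue of I_N − D with eigenvector x ∈ ℂ^N, then x̃ = P x is a nonzero vector satisfying (I_{N−1} − D̃) x̃ = λ x̃, where P = [I_{N−1} | −𝟏] ∈ ℂ^{(N−1)×N}. Conversely, if x̃ ∈ ℂ^{N−1} is an eigenvector of I_{N−1} − D̃ with nonzero eigenvalue λ, then x = (I_N − D) Q x̃ is a nonzero vector satisfying (I_N − D) x = λ x, where Q = [I_{N−1}; 0] ∈ ℂ^{N×(N−1)}. -/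
/-!
Write `P` for the difference matrix and `Q` for the embedding `ℂ^{N-1} → ℂ^N`. Then
`D̃ = P D Q`, `P Q = I` and `Q P = I - 𝟏 e_Nᵀ`. Since `(I - D) 𝟏 = 0` and `P D 𝟏 = P 𝟏 = 0`,
the rank-one correction is invisible after `I - D` and after `P D`, which gives the two
intertwining relations `P (I - D) = (I - D̃) P` and `(I - D) Q P = I - D`. These alone transport
eigenvectors for a nonzero eigenvalue both ways: `P x = 0` would force
`(I - D) x = (I - D) Q P x = 0`, and `P` sends `(I - D) Q x̃` to `λ x̃ ≠ 0`.
-/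

open Matrix

section Intertwining

variable {R : Type*} [CommRing R] [NoZeroDivisors R] {m k : Type*} [Fintype m] [Fintype k]
  {A : Matrix m m R} {B : Matrix k k R} {P : Matrix k m R} {Q : Matrix m k R} {lam : R}

theorem mulVec_eigenvector_of_intertwine (hPA : P * A = B * P) (hAQP : A * Q * P = A)
    (hlam : lam ≠ 0) {x : m → R} (hx : x ≠ 0) (hAx : A *ᵥ x = lam • x) :
    P *ᵥ x ≠ 0 ∧ B *ᵥ (P *ᵥ x) = lam • P *ᵥ x := by
  refine ⟨fun hPx => ?_, by rw [mulVec_mulVec, ← hPA, ← mulVec_mulVec, hAx, mulVec_smul]⟩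
  have hAx0 : A *ᵥ x = 0 := by rw [← hAQP, ← mulVec_mulVec, hPx, mulVec_zero]
  exact smul_ne_zero hlam hx (hAx ▸ hAx0)

theorem mulVec_mulVec_eigenvector_of_intertwine [DecidableEq k] (hPA : P * A = B * P)
    (hAQP : A * Q * P = A) (hPQ : P * Q = 1) (hlam : lam ≠ 0) {y : k → R} (hy : y ≠ 0)
    (hBy : B *ᵥ y = lam • y) :
    A *ᵥ (Q *ᵥ y) ≠ 0 ∧ A *ᵥ (A *ᵥ (Q *ᵥ y)) = lam • A *ᵥ (Q *ᵥ y) := by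
  have hPAQy : P *ᵥ (A *ᵥ (Q *ᵥ y)) = lam • y := by
    rw [mulVec_mulVec, mulVec_mulVec, hPA, Matrix.mul_assoc, hPQ, Matrix.mul_one, hBy]
  refine ⟨fun h => smul_ne_zero hlam hy (by rw [← hPAQy, h, mulVec_zero]), ?_⟩
  calc A *ᵥ (A *ᵥ (Q *ᵥ y)) = (A * Q * P) *ᵥ (A *ᵥ (Q *ᵥ y)) := by rw [hAQP]
    _ = A *ᵥ (Q *ᵥ (lam • y)) := by rw [← mulVec_mulVec, ← mulVec_mulVec, hPAQy]
    _ = lam • A *ᵥ (Q *ᵥ y) := by rw [mulVec_smul, mulVec_smul]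

end Intertwining

section Reduction

variable (R : Type*) [CommRing R] (n : ℕ) {o : Type*}

def diffMatrix : Matrix (Fin n) (Fin (n + 1)) R :=
  of fun i j => if j = i.castSucc then 1 else if j = Fin.last n then -1 else 0

def castSuccMatrix : Matrix (Fin (n + 1)) (Fin n) R :=
  of fun i j => if i = j.castSucc then 1 else 0

variable {R n}

theorem diffMatrix_mul_apply (M : Matrix (Fin (n + 1)) o R) (i : Fin n) (j : o) :
    (diffMatrix R n * M) i j = M i.castSucc j - M (Fin.last n) j := by
  simp [mul_apply, diffMatrix, Fin.sum_univ_castSucc, ite_mul, Fin.castSucc_ne_last,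
    (Fin.castSucc_ne_last _).symm, sub_eq_add_neg]

theorem mul_castSuccMatrix_apply (M : Matrix o (Fin (n + 1)) R) (i : o) (j : Fin n) :
    (M * castSuccMatrix R n) i j = M i j.castSucc := by
  simp [mul_apply, castSuccMatrix]

theorem diffMatrix_mul_castSuccMatrix : diffMatrix R n * castSuccMatrix R n = 1 := by
  ext i j
  simp [diffMatrix_mul_apply, castSuccMatrix, one_apply, (Fin.castSucc_ne_last _).symm]

theorem castSuccMatrix_mul_diffMatrix :
    castSuccMatrix R n * diffMatrix R n
      = 1 - vecMulVec (fun _ => 1) (Pi.single (Fin.last n) 1) := by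
  ext i j
  induction i using Fin.lastCases <;> induction j using Fin.lastCases <;>
  simp [mul_apply, castSuccMatrix, diffMatrix, one_apply, vecMulVec_apply,
    Fin.castSucc_ne_last, (Fin.castSucc_ne_last _).symm]

theorem diffMatrix_mulVec_one : (diffMatrix R n *ᵥ fun _ => 1) = 0 := by
  ext i
  simp [mulVec, dotProduct, diffMatrix, Fin.sum_univ_castSucc, (Fin.castSucc_ne_last i).symm]

theorem mul_castSuccMatrix_mul_diffMatrix {M : Matrix o (Fin (n + 1)) R}
    (hM : (M *ᵥ fun _ => 1) = 0) : M * castSuccMatrix R n * diffMatrix R n = M := by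
  rw [Matrix.mul_assoc, castSuccMatrix_mul_diffMatrix, Matrix.mul_sub, mul_vecMulVec, hM]
  simp

variable {D : Matrix (Fin (n + 1)) (Fin (n + 1)) R}

theorem diffMatrix_mul_one_sub (hD : (D *ᵥ fun _ => 1) = fun _ => 1) :
    diffMatrix R n * (1 - D) = (1 - diffMatrix R n * D * castSuccMatrix R n) * diffMatrix R n := by
  have hPD : ((diffMatrix R n * D) *ᵥ fun _ => 1) = 0 := by
    rw [← mulVec_mulVec, hD, diffMatrix_mulVec_one]
  rw [Matrix.sub_mul, mul_castSuccMatrix_mul_diffMatrix hPD, Matrix.mul_sub, Matrix.one_mul,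
    Matrix.mul_one]

theorem one_sub_mul_castSuccMatrix_mul_diffMatrix (hD : (D *ᵥ fun _ => 1) = fun _ => 1) :
    (1 - D) * castSuccMatrix R n * diffMatrix R n = 1 - D :=
  mul_castSuccMatrix_mul_diffMatrix (by rw [sub_mulVec, one_mulVec, hD, sub_self])

end Reduction

theorem reduced_matrix_eigenvector_correspondence_general
    (n : ℕ)
    (D : Matrix (Fin (n + 1)) (Fin (n + 1)) ℂ)
    (hrow : D.mulVec (fun _ => 1) = fun _ => 1)
    (Dt : Matrix (Fin n) (Fin n) ℂ)
    (hDt : ∀ i j : Fin n, Dt i j = D i.castSucc j.castSucc - D (Fin.last n) j.castSucc)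
    (P : Matrix (Fin n) (Fin (n + 1)) ℂ)
    (hP : ∀ (i : Fin n) (j : Fin (n + 1)),
      P i j = if j = i.castSucc then 1 else if j = Fin.last n then -1 else 0)
    (Q : Matrix (Fin (n + 1)) (Fin n) ℂ)
    (hQ : ∀ (i : Fin (n + 1)) (j : Fin n), Q i j = if i = j.castSucc then 1 else 0)
    (lam : ℂ) (hlam : lam ≠ 0) :
    (∀ x : Fin (n + 1) → ℂ, x ≠ 0 →
      ((1 : Matrix (Fin (n + 1)) (Fin (n + 1)) ℂ) - D).mulVec x = lam • x →
      P.mulVec x ≠ 0 ∧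
        ((1 : Matrix (Fin n) (Fin n) ℂ) - Dt).mulVec (P.mulVec x)
          = lam • P.mulVec x) ∧
    (∀ xt : Fin n → ℂ, xt ≠ 0 →
      ((1 : Matrix (Fin n) (Fin n) ℂ) - Dt).mulVec xt = lam • xt →
      ((1 : Matrix (Fin (n + 1)) (Fin (n + 1)) ℂ) - D).mulVec (Q.mulVec xt) ≠ 0 ∧
        ((1 : Matrix (Fin (n + 1)) (Fin (n + 1)) ℂ) - D).mulVec
            (((1 : Matrix (Fin (n + 1)) (Fin (n + 1)) ℂ) - D).mulVec (Q.mulVec xt))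
          = lam • (((1 : Matrix (Fin (n + 1)) (Fin (n + 1)) ℂ) - D).mulVec
              (Q.mulVec xt))) := by
  obtain rfl : P = diffMatrix ℂ n := Matrix.ext hP
  obtain rfl : Q = castSuccMatrix ℂ n := Matrix.ext hQ
  obtain rfl : Dt = diffMatrix ℂ n * D * castSuccMatrix ℂ n := Matrix.ext fun i j => by
    rw [hDt, mul_castSuccMatrix_apply, diffMatrix_mul_apply]
  have hPA := diffMatrix_mul_one_sub hrow
  have hAQP := one_sub_mul_castSuccMatrix_mul_diffMatrix hrow
  exact ⟨fun x hx hAx => mulVec_eigenvector_of_intertwine hPA hAQP hlam hx hAx,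
    fun y hy hBy => mulVec_mulVec_eigenvector_of_intertwine hPA hAQP
      diffMatrix_mul_castSuccMatrix hlam hy hBy⟩

theorem reduced_matrix_eigenvector_correspondence
    (n : ℕ) (hn : 1 ≤ n)
    (D : Matrix (Fin (n + 1)) (Fin (n + 1)) ℂ)
    (hrow : D.mulVec (fun _ => 1) = fun _ => 1)
    (Dt : Matrix (Fin n) (Fin n) ℂ)
    (hDt : ∀ i j : Fin n, Dt i j = D i.castSucc j.castSucc - D (Fin.last n) j.castSucc)
    (P : Matrix (Fin n) (Fin (n + 1)) ℂ)
    (hP : ∀ (i : Fin n) (j : Fin (n + 1)),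
      P i j = if j = i.castSucc then 1 else if j = Fin.last n then -1 else 0)
    (Q : Matrix (Fin (n + 1)) (Fin n) ℂ)
    (hQ : ∀ (i : Fin (n + 1)) (j : Fin n), Q i j = if i = j.castSucc then 1 else 0)
    (lam : ℂ) (hlam : lam ≠ 0) :
    (∀ x : Fin (n + 1) → ℂ, x ≠ 0 →
      ((1 : Matrix (Fin (n + 1)) (Fin (n + 1)) ℂ) - D).mulVec x = lam • x →
      P.mulVec x ≠ 0 ∧
        ((1 : Matrix (Fin n) (Fin n) ℂ) - Dt).mulVec (P.mulVec x)
          = lam • P.mulVec x) ∧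
    (∀ xt : Fin n → ℂ, xt ≠ 0 →
      ((1 : Matrix (Fin n) (Fin n) ℂ) - Dt).mulVec xt = lam • xt →
      ((1 : Matrix (Fin (n + 1)) (Fin (n + 1)) ℂ) - D).mulVec (Q.mulVec xt) ≠ 0 ∧
        ((1 : Matrix (Fin (n + 1)) (Fin (n + 1)) ℂ) - D).mulVec
            (((1 : Matrix (Fin (n + 1)) (Fin (n + 1)) ℂ) - D).mulVec (Q.mulVec xt))
          = lam • (((1 : Matrix (Fin (n + 1)) (Fin (n + 1)) ℂ) - D).mulVec
              (Q.mulVec xt))) :=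
  reduced_matrix_eigenvector_correspondence_general n D hrow Dt hDt P hP Q hQ lam hlam
end
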